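/- arXiv:1702.07605 — 5 statements merged into one kernel-verified Lean document; each statement's English description precedes it below -/
import Mathlib

section
/- A proper distance-2 coloring of a finite simple graph G exists using, at each vertex v, a color from the range [1, Δ(v)² + 1], where Δ(v) is the maximum degree among v and its neighbors. That is, there is a coloring c : V → ℕ with c(v) ≤ Δ(v)² + 1 for all v, such that any two distinct vertices at distance at most 2 receive distinct colors. -/
/-!
Let `G²` be the graph joining distinct vertices at distance at most two in `G`. A vertex `v` has
at most `Δ(v)²` neighbours in `G²`: each is reached through one of the `deg v ≤ Δ(v)` neighbours
`x` of `v`, and each such `x` contributes itself and its neighbours other than `v`, i.e.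
`deg x ≤ Δ(v)` vertices. Colouring the vertices greedily in any order, `v` sees at most
`deg_{G²} v` forbidden colours, so one of `1, …, deg_{G²} v + 1` is free.
-/

open Finset

namespace SimpleGraph

variable {V : Type*}

theorem exists_coloring_le_degree_add_one [Fintype V] [DecidableEq V] (H : SimpleGraph V)
    [DecidableRel H.Adj] :
    ∃ c : V → ℕ, (∀ v, 1 ≤ c v ∧ c v ≤ H.degree v + 1) ∧ ∀ u w, H.Adj u w → c u ≠ c w := by
  suffices ∀ s : Finset V, ∃ c : V → ℕ, (∀ v, 1 ≤ c v ∧ c v ≤ H.degree v + 1) ∧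
      ∀ u ∈ s, ∀ w ∈ s, H.Adj u w → c u ≠ c w by
    obtain ⟨c, hc, hproper⟩ := this univ
    exact ⟨c, hc, fun u w => hproper u (mem_univ u) w (mem_univ w)⟩
  intro s
  induction s using Finset.induction_on with
  | empty => exact ⟨fun _ => 1, fun v => ⟨le_rfl, Nat.le_add_left 1 _⟩, by simp⟩
  | insert a s ha ih =>
    obtain ⟨c, hc, hproper⟩ := ih
    have hfree : (Icc 1 (H.degree a + 1) \ (H.neighborFinset a).image c).Nonempty := by
      rw [← card_pos]
      have := le_card_sdiff ((H.neighborFinset a).image c) (Icc 1 (H.degree a + 1))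
      have := card_image_le (s := H.neighborFinset a) (f := c)
      simp only [Nat.card_Icc, card_neighborFinset_eq_degree] at *
      omega
    obtain ⟨k, hk⟩ := hfree
    simp only [mem_sdiff, mem_Icc, mem_image, mem_neighborFinset, not_exists, not_and] at hk
    have hne : ∀ w, H.Adj a w → k ≠ c w := fun w haw h => hk.2 w haw h.symm
    refine ⟨Function.update c a k, fun v => ?_, ?_⟩
    · rcases eq_or_ne v a with rfl | hva
      · simpa using hk.1
      · simpa [hva] using hc v
    · intro u hu w hw huw
      have hwu : w ≠ u := huw.ne'
      rcases eq_or_ne u a with rfl | hua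
      · simpa [hwu] using hne w huw
      rcases eq_or_ne w a with rfl | hwa
      · simpa [hua] using (hne u huw.symm).symm
      · simpa [hua, hwa] using
          hproper u ((mem_insert.1 hu).resolve_left hua) w ((mem_insert.1 hw).resolve_left hwa) huw

def distTwo (G : SimpleGraph V) : SimpleGraph V where
  Adj u w := u ≠ w ∧ (G.Adj u w ∨ ∃ x, G.Adj u x ∧ G.Adj x w)
  symm := ⟨fun _ _ ⟨hne, h⟩ =>
    ⟨hne.symm, h.imp (fun h => h.symm) fun ⟨x, hux, hxw⟩ => ⟨x, hxw.symm, hux.symm⟩⟩⟩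
  loopless := ⟨fun _ h => h.1 rfl⟩

@[simp]
theorem distTwo_adj (G : SimpleGraph V) {u w : V} :
    G.distTwo.Adj u w ↔ u ≠ w ∧ (G.Adj u w ∨ ∃ x, G.Adj u x ∧ G.Adj x w) :=
  Iff.rfl

instance [Fintype V] [DecidableEq V] (G : SimpleGraph V) [DecidableRel G.Adj] :
    DecidableRel G.distTwo.Adj :=
  fun _ _ => decidable_of_iff' _ G.distTwo_adj

variable [Fintype V] [DecidableEq V] (G : SimpleGraph V) [DecidableRel G.Adj]

/-- The paper's `Δ(v)`. -/
def maxDegreeNear (v : V) : ℕ := (insert v (G.neighborFinset v)).sup fun x => G.degree x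

theorem degree_le_maxDegreeNear {v x : V} (hx : x = v ∨ G.Adj v x) :
    G.degree x ≤ G.maxDegreeNear v :=
  le_sup (f := fun x => G.degree x) (by simpa using hx)

theorem neighborFinset_distTwo_subset (v : V) :
    G.distTwo.neighborFinset v ⊆
      (G.neighborFinset v).biUnion fun x => (insert x (G.neighborFinset x)).erase v := by
  intro w hw
  obtain ⟨hne, hvw | ⟨x, hvx, hxw⟩⟩ := (G.distTwo_adj).1 ((G.distTwo.mem_neighborFinset v w).1 hw)
  · exact mem_biUnion.2 ⟨w, by simpa using hvw, by simpa using hne.symm⟩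
  · exact mem_biUnion.2 ⟨x, by simpa using hvx, by simp [hne.symm, hxw]⟩

theorem degree_distTwo_le (v : V) : G.distTwo.degree v ≤ G.maxDegreeNear v ^ 2 := by
  have hcard : ∀ x ∈ G.neighborFinset v,
      #((insert x (G.neighborFinset x)).erase v) ≤ G.maxDegreeNear v := by
    intro x hx
    rw [mem_neighborFinset] at hx
    rw [card_erase_of_mem (by simpa using Or.inr hx.symm),
      card_insert_of_notMem (by simp), card_neighborFinset_eq_degree, Nat.add_sub_cancel]
    exact G.degree_le_maxDegreeNear (Or.inr hx)
  calc G.distTwo.degree v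
      = #(G.distTwo.neighborFinset v) := (card_neighborFinset_eq_degree _ _).symm
    _ ≤ #((G.neighborFinset v).biUnion fun x => (insert x (G.neighborFinset x)).erase v) :=
        card_le_card (G.neighborFinset_distTwo_subset v)
    _ ≤ ∑ x ∈ G.neighborFinset v, #((insert x (G.neighborFinset x)).erase v) := card_biUnion_le
    _ ≤ G.degree v * G.maxDegreeNear v := by
        simpa [card_neighborFinset_eq_degree] using sum_le_sum hcard
    _ ≤ G.maxDegreeNear v ^ 2 := by
        rw [sq]
        exact Nat.mul_le_mul_right _ (G.degree_le_maxDegreeNear (Or.inl rfl))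

end SimpleGraph

/-- A proper distance-2 coloring exists using at each vertex `v` a color in the range
`[1, Δ v ^ 2 + 1]`, where `Δ v` is the maximum degree among `v` and its neighbors. -/
theorem stmt_1 {V : Type*} [Fintype V] [DecidableEq V] (G : SimpleGraph V)
    [DecidableRel G.Adj] :
    ∃ c : V → ℕ,
      (∀ v, 1 ≤ c v ∧ c v ≤ ((insert v (G.neighborFinset v)).sup (fun x => G.degree x)) ^ 2 + 1) ∧
      ∀ u w, u ≠ w → (G.Adj u w ∨ ∃ x, G.Adj u x ∧ G.Adj x w) → c u ≠ c w := by
  obtain ⟨c, hc, hproper⟩ := G.distTwo.exists_coloring_le_degree_add_one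
  exact ⟨c, fun v => ⟨(hc v).1, (hc v).2.trans (Nat.add_le_add_right (G.degree_distTwo_le v) 1)⟩,
    fun u w hne hdist => hproper u w (G.distTwo_adj.2 ⟨hne, hdist⟩)⟩
end

section
/- Uniqueness of identifiers yields cycle detection: if in a parent structure (each vertex has at most one parent) every vertex v satisfies m(v) = min({id(v)} ∪ {m(u) : u child of v}) with id injective, and some vertex v has a child u with m(u) = id(v), then v lies on a cycle of the parent relation. Conversely, in an acyclic parent structure, m(u) = id(v) for a child u of v is impossible. -/
/-!
Let `S` be the set of vertices `w` with `m w = id v`. By injectivity of `id`, the minimum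
defining `m w` for `w ∈ S \ {v}` is attained at a child, which again lies in `S`. Descending
through such children from `u`, either we reach `v`, which closes the cycle `v ← ⋯ ← u → v`,
or, by finiteness, the descendants of `u` in `S` contain a cycle of the parent relation. In a
functional relation every ancestor of a vertex on a cycle lies on that cycle, so `u`, and
then `v`, lie on a cycle as well.
-/

namespace Relation

variable {α : Type*} {r : α → α → Prop}

theorem TransGen.self_of_reflTransGen (hr : ∀ a b c, r a b → r a c → b = c) {a b : α}
    (ha : TransGen r a a) (hab : ReflTransGen r a b) : TransGen r b b := by
  induction hab with
  | refl => exact ha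
  | tail _ hcd ih =>
    obtain ⟨e, hce, hec⟩ := TransGen.head'_iff.mp ih
    rw [hr _ _ _ hce hcd] at hec
    exact TransGen.tail' hec hcd

theorem exists_transGen_self_of_forall_exists_rel [Finite α] {s : Set α} (hs : s.Nonempty)
    (h : ∀ a ∈ s, ∃ b ∈ s, r b a) : ∃ a ∈ s, TransGen r a a := by
  by_contra! hacyc
  have : Std.Irrefl (fun a b => TransGen r a b ∧ a ∈ s) := ⟨fun a ⟨ha, has⟩ => hacyc a has ha⟩
  have : IsTrans α (fun a b => TransGen r a b ∧ a ∈ s) :=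
    ⟨fun _ _ _ ⟨hab, has⟩ ⟨hbc, _⟩ => ⟨hab.trans hbc, has⟩⟩
  obtain ⟨a, has, hmin⟩ := (Finite.wellFounded_of_trans_of_irrefl
    (fun a b => TransGen r a b ∧ a ∈ s)).has_min s hs
  obtain ⟨b, hbs, hba⟩ := h a has
  exact hmin b hbs ⟨TransGen.single hba, hbs⟩

end Relation

open Relation

section MinIdFixpoint

variable {V : Type*} {p : V → Option V} {idf m : V → ℕ}

theorem eq_id_or_exists_child_eq_of_fixpoint
    (hm : ∀ v, m v = sInf ({idf v} ∪ {x | ∃ u, p u = some v ∧ m u = x})) (w : V) :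
    m w = idf w ∨ ∃ u, p u = some w ∧ m u = m w := by
  have hmem : m w ∈ ({idf w} ∪ {x | ∃ u, p u = some w ∧ m u = x} : Set ℕ) := by
    rw [hm w]
    exact Nat.sInf_mem ⟨idf w, Or.inl rfl⟩
  exact hmem.imp id id

theorem transGen_self_of_child_eq_id_of_fixpoint [Finite V] (hinj : Function.Injective idf)
    (hm : ∀ v, m v = sInf ({idf v} ∪ {x | ∃ u, p u = some v ∧ m u = x}))
    {v u : V} (hpu : p u = some v) (hmu : m u = idf v) :
    TransGen (fun a b => p a = some b) v v := by
  have hfun : ∀ a b c, p a = some b → p a = some c → b = c := fun _ _ _ hb hc =>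
    Option.some.inj (hb.symm.trans hc)
  by_contra hv
  set s := {w | m w = idf v ∧ ReflTransGen (fun a b => p a = some b) w u}
  have hchild : ∀ w ∈ s, ∃ w' ∈ s, p w' = some w := by
    rintro w ⟨hw, hwu⟩
    have hwv : w ≠ v := by
      rintro rfl
      exact hv (TransGen.tail' hwu hpu)
    rcases eq_id_or_exists_child_eq_of_fixpoint hm w with hid | ⟨w', hw'w, hw'⟩
    · exact absurd (hinj (hid.symm.trans hw)) hwv
    · exact ⟨w', ⟨hw'.trans hw, hwu.head hw'w⟩, hw'w⟩
  obtain ⟨w, ⟨_, hwu⟩, hcyc⟩ :=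
    exists_transGen_self_of_forall_exists_rel (s := s) ⟨u, hmu, ReflTransGen.refl⟩ hchild
  exact hv (hcyc.self_of_reflTransGen hfun (hwu.tail hpu))

end MinIdFixpoint

/-- Uniqueness of identifiers yields cycle detection: with `m` a fixpoint of
`m v = min({id v} ∪ {m u : u child of v})` and `id` injective, if some vertex `v` has a
child `u` with `m u = id v` then `v` lies on a cycle of the parent relation; conversely, in
an acyclic parent structure `m u = id v` for a child `u` of `v` is impossible. -/
theorem stmt_7 {V : Type*} [Fintype V] (p : V → Option V) (idf : V → ℕ)
    (hinj : Function.Injective idf) (m : V → ℕ)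
    (hm : ∀ v, m v = sInf ({idf v} ∪ {x | ∃ u, p u = some v ∧ m u = x})) :
    (∀ v u, p u = some v → m u = idf v →
      Relation.TransGen (fun a b => p a = some b) v v) ∧
    ((∀ x, ¬ Relation.TransGen (fun a b => p a = some b) x x) →
      ∀ v u, p u = some v → m u ≠ idf v) := by
  have hcycle := fun v u (hpu : p u = some v) =>
    transGen_self_of_child_eq_id_of_fixpoint (m := m) hinj hm hpu
  exact ⟨hcycle, fun hacyc v u hpu hmu => hacyc v (hcycle v u hpu hmu)⟩
end

section
/- The invariant of fragment merging preserves acyclicity: let V be finite, and consider a parent function p that changes only by the following two operations: (Merge) a root v (p(v) undefined) sets p(v) := u for a vertex u that is not a descendant of v; (ReRoot) a root v sets p(v) := u where u is a child of v, and simultaneously u deletes its parent (p(u) becomes undefined). If the initial parent structure is acyclic, then after any sequence of such operations the parent structure remains acyclic. -/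
/-- One step of fragment merging: either a root `v` attaches to a vertex `u` that is not a
descendant of `v` (Merge), or a root `v` attaches to one of its children `u`, which
simultaneously deletes its parent pointer (ReRoot). -/
def Stmt9Move {V : Type*} [DecidableEq V] (p p' : V → Option V) : Prop :=
  (∃ v u, p v = none ∧ ¬ Relation.ReflTransGen (fun a b => p a = some b) u v ∧
      p' = Function.update p v (some u)) ∨
  (∃ v u, p v = none ∧ p u = some v ∧
      p' = fun w => if w = v then some u else if w = u then none else p w)

/-!
Both moves are instances of adding one edge `v → u` to an acyclic relation in which `u` does not
reach `v`: Merge literally, and ReRoot after first deleting the parent pointer of `u`, which makes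
`u` a root and hence unable to reach `v ≠ u`. Such an edge cannot close a cycle, because a cycle
through it, cut at its first use of the edge, yields a path from `u` to `v` avoiding the edge.
-/

open Relation Function

namespace Relation

variable {α : Type*}

def IsAcyclic (r : α → α → Prop) : Prop := ∀ x, ¬ TransGen r x x

theorem IsAcyclic.mono {r s : α → α → Prop} (hr : IsAcyclic r) (hsr : s ≤ r) : IsAcyclic s :=
  fun x hx => hr x (TransGen.mono hsr _ _ hx)

theorem transGen_or_through_edge {r s : α → α → Prop} {v u x y : α}
    (hrs : ∀ a b, r a b → s a b ∨ (a = v ∧ b = u)) (h : TransGen r x y) :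
    TransGen s x y ∨ (ReflTransGen s x v ∧ ReflTransGen s u y) := by
  induction h with
  | single hxy =>
    rcases hrs _ _ hxy with hs | ⟨rfl, rfl⟩
    · exact .inl (.single hs)
    · exact .inr ⟨.refl, .refl⟩
  | tail _ hbc ih =>
    rcases hrs _ _ hbc with hs | ⟨rfl, rfl⟩
    · rcases ih with hxb | ⟨hxv, hub⟩
      · exact .inl (hxb.tail hs)
      · exact .inr ⟨hxv, hub.tail hs⟩
    · rcases ih with hxv | ⟨hxv, -⟩
      · exact .inr ⟨hxv.to_reflTransGen, .refl⟩
      · exact .inr ⟨hxv, .refl⟩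

theorem IsAcyclic.of_le_sup_edge {r s : α → α → Prop} {v u : α} (hs : IsAcyclic s)
    (hrs : ∀ a b, r a b → s a b ∨ (a = v ∧ b = u)) (huv : ¬ ReflTransGen s u v) :
    IsAcyclic r := by
  intro x hx
  rcases transGen_or_through_edge hrs hx with hxx | ⟨hxv, hux⟩
  · exact hs x hxx
  · exact huv (hux.trans hxv)

end Relation

section ParentStructure

variable {V : Type*}

def parentRel (p : V → Option V) (a b : V) : Prop := p a = some b

theorem eq_of_reflTransGen_parentRel_of_root {p : V → Option V} {u v : V} (hu : p u = none)
    (h : ReflTransGen (parentRel p) u v) : u = v := by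
  rcases h.cases_head with huv | ⟨w, huw, -⟩
  · exact huv
  · simp [parentRel, hu] at huw

variable [DecidableEq V]

theorem isAcyclic_parentRel_update_none {p : V → Option V} (hp : IsAcyclic (parentRel p))
    (u : V) : IsAcyclic (parentRel (update p u none)) := by
  refine hp.mono fun a b hab => ?_
  by_cases hau : a = u
  · simp [parentRel, hau] at hab
  · simpa [parentRel, hau] using hab

theorem isAcyclic_parentRel_update_some {p : V → Option V} {v u : V}
    (hp : IsAcyclic (parentRel p)) (huv : ¬ ReflTransGen (parentRel p) u v) :
    IsAcyclic (parentRel (update p v (some u))) := by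
  refine hp.of_le_sup_edge (fun a b hab => ?_) huv
  simp only [parentRel, update_apply] at hab
  split_ifs at hab with hav
  · exact .inr ⟨hav, (Option.some_inj.mp hab).symm⟩
  · exact .inl hab

theorem Stmt9Move.isAcyclic {p p' : V → Option V} (hmove : Stmt9Move p p')
    (hp : IsAcyclic (parentRel p)) : IsAcyclic (parentRel p') := by
  rcases hmove with ⟨v, u, -, huv, rfl⟩ | ⟨v, u, hv, hu, rfl⟩
  · exact isAcyclic_parentRel_update_some hp huv
  · have hne : u ≠ v := by rintro rfl; simp [hv] at hu
    have hreroot : (fun w => if w = v then some u else if w = u then none else p w) =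
        update (update p u none) v (some u) := by
      funext w
      by_cases hwv : w = v <;> by_cases hwu : w = u <;> simp_all
    rw [hreroot]
    refine isAcyclic_parentRel_update_some (isAcyclic_parentRel_update_none hp u) fun h => ?_
    exact hne (eq_of_reflTransGen_parentRel_of_root (update_self u none p) h)

end ParentStructure

theorem stmt_9_general {V : Type*} [DecidableEq V] (p₀ p₁ : V → Option V)
    (h₀ : ∀ x, ¬ Relation.TransGen (fun a b => p₀ a = some b) x x)
    (hsteps : Relation.ReflTransGen Stmt9Move p₀ p₁) :
    ∀ x, ¬ Relation.TransGen (fun a b => p₁ a = some b) x x := by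
  induction hsteps with
  | refl => exact h₀
  | tail _ hmove ih => exact hmove.isAcyclic ih

/-- If the initial parent structure is acyclic, then after any sequence of Merge/ReRoot
operations it remains acyclic. -/
theorem stmt_9 {V : Type*} [Fintype V] [DecidableEq V] (p₀ p₁ : V → Option V)
    (h₀ : ∀ x, ¬ Relation.TransGen (fun a b => p₀ a = some b) x x)
    (hsteps : Relation.ReflTransGen Stmt9Move p₀ p₁) :
    ∀ x, ¬ Relation.TransGen (fun a b => p₁ a = some b) x x :=
  stmt_9_general p₀ p₁ h₀ hsteps
end

section
/- In the distance-2 coloring conflict-resolution scheme, at any configuration with at least one color conflict, the set of 'player' nodes is nonempty and disjoint from the set of 'relay' nodes: no node v can simultaneously satisfy Player(v) and Relay(v), and if some two vertices at distance ≤ 2 share a color then some vertex is a player. -/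
open scoped ENat

/-- The closed neighborhood of `v`. -/
def cNbr {V : Type*} [Fintype V] [DecidableEq V] (G : SimpleGraph V) [DecidableRel G.Adj]
    (v : V) : Finset V :=
  insert v (G.neighborFinset v)

/-- `minConf G c v` is the minimum color in conflict seen by `v` (as `ℕ∞`, `⊤` if none):
the least `c u` over pairs `u ≠ w` in `N[v]` with `c u = c w`. -/
noncomputable def minConf {V : Type*} [Fintype V] [DecidableEq V] (G : SimpleGraph V)
    [DecidableRel G.Adj] (c : V → ℕ) (v : V) : ℕ∞ :=
  sInf {x : ℕ∞ | ∃ u ∈ cNbr G v, ∃ w ∈ cNbr G v, u ≠ w ∧ c u = c w ∧ x = (c u : ℕ∞)}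

/-- `v` is a player if its color is the minimum conflict color advertised in `N[v]`. -/
def isPlayer {V : Type*} [Fintype V] [DecidableEq V] (G : SimpleGraph V)
    [DecidableRel G.Adj] (c : V → ℕ) (v : V) : Prop :=
  (c v : ℕ∞) = sInf {x : ℕ∞ | ∃ u ∈ cNbr G v, x = minConf G c u}

/-- `v` is a relay if it does not hold the minimum conflict color, yet this minimum is the
least advertised in `N[v]` and at least two of `v`'s neighbors carry it. -/
def isRelay {V : Type*} [Fintype V] [DecidableEq V] (G : SimpleGraph V)
    [DecidableRel G.Adj] (c : V → ℕ) (v : V) : Prop :=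
  minConf G c v ≠ (c v : ℕ∞) ∧
  minConf G c v = sInf {x : ℕ∞ | ∃ u ∈ cNbr G v, x = minConf G c u} ∧
  ∃ u ∈ G.neighborFinset v, ∃ w ∈ G.neighborFinset v, u ≠ w ∧
    (c u : ℕ∞) = minConf G c v ∧ (c w : ℕ∞) = minConf G c v

/-! The least color in conflict anywhere in the graph is seen, as `minConf`, by some vertex `v`,
realized by a pair `u ≠ w` in `N[v]`. Every vertex advertises at least this global minimum, and `v`
lies in `N[u]`, so the least value advertised around `u` is exactly `c u`: `u` is a player.
A relay's own advertised value is the least around it but differs from its color, so a relay is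
never a player. -/

section ConflictResolution

variable {V : Type*} [Fintype V] [DecidableEq V] (G : SimpleGraph V) [DecidableRel G.Adj]
  (c : V → ℕ)

theorem mem_cNbr_comm {u v : V} : u ∈ cNbr G v ↔ v ∈ cNbr G u := by
  simp only [cNbr, Finset.mem_insert, SimpleGraph.mem_neighborFinset, eq_comm, G.adj_comm]

theorem minConf_le {v u w : V} (hu : u ∈ cNbr G v) (hw : w ∈ cNbr G v) (huw : u ≠ w)
    (hc : c u = c w) : minConf G c v ≤ c u :=
  sInf_le ⟨u, hu, w, hw, huw, hc, rfl⟩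

theorem exists_conflict_eq_minConf {v : V} (hv : minConf G c v ≠ ⊤) :
    ∃ u ∈ cNbr G v, ∃ w ∈ cNbr G v, u ≠ w ∧ c u = c w ∧ minConf G c v = c u := by
  have hne : {x : ℕ∞ | ∃ u ∈ cNbr G v, ∃ w ∈ cNbr G v, u ≠ w ∧ c u = c w ∧
      x = (c u : ℕ∞)}.Nonempty :=
    Set.nonempty_iff_ne_empty.2 fun h => hv (by rw [minConf, h, sInf_empty])
  exact csInf_mem hne

theorem exists_minConf_le_of_conflict {a b : V} (hab : a ≠ b)
    (hdist : G.Adj a b ∨ ∃ x, G.Adj a x ∧ G.Adj x b) (hc : c a = c b) :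
    ∃ v, minConf G c v ≤ c a := by
  rcases hdist with h | ⟨x, hax, hxb⟩
  · exact ⟨a, minConf_le G c (by simp [cNbr]) (by simp [cNbr, h]) hab hc⟩
  · exact ⟨x, minConf_le G c (by simp [cNbr, hax.symm]) (by simp [cNbr, hxb]) hab hc⟩

theorem isPlayer_of_minConf_eq_iInf {u v : V} (hv : minConf G c v = ⨅ t, minConf G c t)
    (hu : u ∈ cNbr G v) (hcu : minConf G c v = c u) : isPlayer G c u := by
  refine le_antisymm ?_ (sInf_le_of_le ⟨v, (mem_cNbr_comm G).1 hu, rfl⟩ hcu.le)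
  refine le_sInf ?_
  rintro _ ⟨t, -, rfl⟩
  exact hcu ▸ hv ▸ iInf_le _ t

theorem not_isPlayer_and_isRelay (v : V) : ¬ (isPlayer G c v ∧ isRelay G c v) :=
  fun ⟨hp, hr⟩ => hr.1 (hr.2.1.trans hp.symm)

theorem exists_isPlayer_of_conflict {a b : V} (hab : a ≠ b)
    (hdist : G.Adj a b ∨ ∃ x, G.Adj a x ∧ G.Adj x b) (hc : c a = c b) :
    ∃ v, isPlayer G c v := by
  obtain ⟨v, hv⟩ := exists_minConf_le_of_conflict G c hab hdist hc
  have : Nonempty V := ⟨a⟩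
  obtain ⟨v₀, hv₀⟩ := exists_eq_ciInf_of_finite (f := minConf G c)
  have hv₀_ne_top : minConf G c v₀ ≠ ⊤ :=
    ne_top_of_le_ne_top (ENat.natCast_ne_top (c a)) (hv₀ ▸ (iInf_le _ v).trans hv)
  obtain ⟨u, hu, -, -, -, -, hcu⟩ := exists_conflict_eq_minConf G c hv₀_ne_top
  exact ⟨u, isPlayer_of_minConf_eq_iInf G c hv₀ hu hcu⟩

end ConflictResolution

/-- No node is simultaneously a player and a relay, and whenever two vertices at distance
at most two share a color, some vertex is a player. -/
theorem stmt_15 {V : Type*} [Fintype V] [DecidableEq V] (G : SimpleGraph V)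
    [DecidableRel G.Adj] (c : V → ℕ) :
    (∀ v, ¬ (isPlayer G c v ∧ isRelay G c v)) ∧
    ((∃ a b, a ≠ b ∧ (G.Adj a b ∨ ∃ x, G.Adj a x ∧ G.Adj x b) ∧ c a = c b) →
      ∃ v, isPlayer G c v) :=
  ⟨not_isPlayer_and_isRelay G c, fun ⟨_, _, hab, hdist, hc⟩ =>
    exists_isPlayer_of_conflict G c hab hdist hc⟩
end

section
/- If each vertex v in a parent structure keeps a record E(v) of the previously seen minimum and a node may only adopt a child's minimum value m(k(v)) when E(v) ≠ m(k(v)), then each vertex adopts each specific value at most a bounded number of times between two resets; consequently, in an acyclic structure of n nodes with values from a finite set of size N, the total number of Min-adoption steps in any execution is finite (the potential Ξ(γ) = (β(γ,0), ..., β(γ,N)) ordered lexicographically, with each β(γ,i) ≤ 4n, strictly decreases at each step). -/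
/-!
Nodes stabilise from the roots down. Once the parent's `m` is constant with value `a`, (Start)
can only set `E v := a`, so `E v` changes at most once more (a root never changes `E` at all).
Once `E v = e` is constant, every change of `m v` produces a value `≠ e`: (Min) by its guard
`E v ≠ m u`, (ID) because it fires only when `m v = E v`. Since (Min) decreases `m v`, after `m v`
first leaves `e` it only decreases, so it is eventually constant. When every node is constant, no
rule can fire.
-/

/-- A step of the cycle-detection rules on a configuration `γ = (m, E)`: some node `v`
with a minimum-`m` child `u` executes (Min) if `m v > m u` and `E v ≠ m u`, adopting
`m v := m u`; or (Start) if `m (p v) = m v = m u` and `E v ≠ m v`, setting `E v := m v`;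
or (ID) if `E (p v) = E v = E u = m v` and `m v ≠ id v`, setting `m v := id v`. -/
def BreakStep {V : Type*} [DecidableEq V] (p : V → Option V) (N : ℕ)
    (idf : V → Fin (N + 1))
    (γ γ' : (V → Fin (N + 1)) × (V → Fin (N + 1))) : Prop :=
  ∃ v u, p u = some v ∧ (∀ w, p w = some v → γ.1 u ≤ γ.1 w) ∧
    ((γ.1 u < γ.1 v ∧ γ.2 v ≠ γ.1 u ∧
        γ' = (Function.update γ.1 v (γ.1 u), γ.2)) ∨
     (∃ w, p v = some w ∧ γ.1 w = γ.1 v ∧ γ.1 v = γ.1 u ∧ γ.2 v ≠ γ.1 v ∧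
        γ' = (γ.1, Function.update γ.2 v (γ.1 v))) ∨
     (∃ w, p v = some w ∧ γ.2 w = γ.2 v ∧ γ.2 v = γ.2 u ∧ γ.2 v = γ.1 v ∧
        γ.1 v ≠ idf v ∧ γ' = (Function.update γ.1 v (idf v), γ.2)))

open Filter Relation

section EventuallyConst

variable {α : Type*}

theorem eventually_atTop_of_frequently_of_imp_succ {P : ℕ → Prop}
    (hstep : ∀ᶠ t in atTop, P t → P (t + 1)) (hfreq : ∃ᶠ t in atTop, P t) :
    ∀ᶠ t in atTop, P t := by
  obtain ⟨T, hT⟩ := eventually_atTop.1 hstep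
  obtain ⟨s, hTs, hs⟩ := frequently_atTop.1 hfreq T
  refine eventually_atTop.2 ⟨s, fun t hst => ?_⟩
  induction t, hst using Nat.le_induction with
  | base => exact hs
  | succ t hst ih => exact hT t (hTs.trans hst) ih

theorem eventuallyConst_atTop_nat_iff_eventually {u : ℕ → α} :
    EventuallyConst u atTop ↔ ∀ᶠ t in atTop, u (t + 1) = u t :=
  eventuallyConst_atTop_nat.trans eventually_atTop.symm

theorem eventuallyConst_of_succ_ne_imp_eq {u : ℕ → α} {a : α}
    (h : ∀ᶠ t in atTop, u (t + 1) ≠ u t → u (t + 1) = a) : EventuallyConst u atTop := by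
  by_cases hfreq : ∃ᶠ t in atTop, u t = a
  · have ha : ∀ᶠ t in atTop, u t = a :=
      eventually_atTop_of_frequently_of_imp_succ
        (h.mono fun t ht hta => (eq_or_ne (u (t + 1)) (u t)).elim (·.trans hta) ht) hfreq
    exact (EventuallyConst.const a).congr (ha.mono fun _ => Eq.symm)
  · have hne : ∀ᶠ t in atTop, u (t + 1) ≠ a :=
      (tendsto_add_atTop_nat 1).eventually (not_frequently.1 hfreq)
    exact eventuallyConst_atTop_nat_iff_eventually.2 <|
      (hne.and h).mono fun t ⟨hne, ht⟩ => of_not_not (mt ht hne)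

theorem eventuallyConst_of_eventually_succ_le [PartialOrder α] [WellFoundedLT α] {u : ℕ → α}
    (h : ∀ᶠ t in atTop, u (t + 1) ≤ u t) : EventuallyConst u atTop := by
  obtain ⟨T, hT⟩ := eventually_atTop.1 h
  obtain ⟨n, hn⟩ := WellFoundedLT.antitone_chain_condition
    (antitone_nat_of_succ_le fun t => hT (T + t) (Nat.le_add_right T t) : Antitone (u <| T + ·))
  refine eventuallyConst_atTop.2 ⟨T + n, fun j hj => ?_⟩
  obtain ⟨k, rfl⟩ := Nat.exists_eq_add_of_le (le_of_add_le_left hj)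
  exact (hn k (by omega)).symm

theorem eventuallyConst_of_succ_ne_imp [LinearOrder α] [WellFoundedLT α] {u : ℕ → α} {e : α}
    (h : ∀ᶠ t in atTop, u (t + 1) ≠ u t → u (t + 1) ≠ e ∧ (u t ≠ e → u (t + 1) < u t)) :
    EventuallyConst u atTop := by
  by_cases hfreq : ∃ᶠ t in atTop, u t ≠ e
  · have hne : ∀ᶠ t in atTop, u t ≠ e :=
      eventually_atTop_of_frequently_of_imp_succ
        (h.mono fun t ht hte => (eq_or_ne (u (t + 1)) (u t)).elim (· ▸ hte) (ht · |>.1)) hfreq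
    refine eventuallyConst_of_eventually_succ_le <| (hne.and h).mono fun t ⟨hte, ht⟩ => ?_
    exact (eq_or_ne (u (t + 1)) (u t)).elim le_of_eq fun hch => ((ht hch).2 hte).le
  · exact (EventuallyConst.const e).congr
      ((not_frequently.1 hfreq).mono fun _ hte => (of_not_not hte).symm)

end EventuallyConst

theorem wellFounded_swap_of_acyclic {α : Type*} [Finite α] {r : α → α → Prop}
    (h : ∀ x, ¬TransGen r x x) : WellFounded (Function.swap r) :=
  have : Std.Irrefl (TransGen (Function.swap r)) := ⟨fun x hx => h x (transGen_swap.1 hx)⟩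
  (Finite.wellFounded_of_trans_of_irrefl _).mono fun _ _ => TransGen.single

namespace BreakStep

variable {V : Type*} [DecidableEq V] {p : V → Option V} {N : ℕ} {idf : V → Fin (N + 1)}
  {γ γ' : (V → Fin (N + 1)) × (V → Fin (N + 1))}

theorem ne (h : BreakStep p N idf γ γ') : γ' ≠ γ := by
  rintro rfl
  obtain ⟨v, u, -, -, ⟨hlt, -, heq⟩ | ⟨-, -, -, -, hne, heq⟩ | ⟨-, -, -, -, -, hne, heq⟩⟩ := h
  · exact hlt.ne' (by simpa using congr_arg (·.1 v) heq)
  · exact hne (by simpa using congr_arg (·.2 v) heq)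
  · exact hne (by simpa using congr_arg (·.1 v) heq)

theorem exists_parent_of_snd_ne (h : BreakStep p N idf γ γ') {x : V} (hx : γ'.2 x ≠ γ.2 x) :
    ∃ w, p x = some w ∧ γ'.2 x = γ.1 w := by
  obtain ⟨v, u, -, -, ⟨-, -, rfl⟩ | ⟨w, hw, hwv, -, -, rfl⟩ | ⟨-, -, -, -, -, -, -, rfl⟩⟩ := h
  · exact absurd rfl hx
  · obtain rfl : x = v := by_contra fun hxv => hx (Function.update_of_ne hxv _ _)
    exact ⟨w, hw, by simp [hwv]⟩
  · exact absurd rfl hx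

theorem fst_ne_snd_of_fst_ne (h : BreakStep p N idf γ γ') {x : V} (hx : γ'.1 x ≠ γ.1 x) :
    γ'.1 x ≠ γ.2 x ∧ (γ.1 x ≠ γ.2 x → γ'.1 x < γ.1 x) := by
  obtain ⟨v, u, -, -, ⟨hlt, hne, rfl⟩ | ⟨-, -, -, -, -, -, rfl⟩ | ⟨-, -, -, -, hEm, hid, rfl⟩⟩ := h
  · obtain rfl : x = v := by_contra fun hxv => hx (Function.update_of_ne hxv _ _)
    simp only [Function.update_self]
    exact ⟨hne.symm, fun _ => hlt⟩
  · exact absurd rfl hx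
  · obtain rfl : x = v := by_contra fun hxv => hx (Function.update_of_ne hxv _ _)
    simp only [Function.update_self]
    exact ⟨fun h => hid (h.trans hEm).symm, fun h => absurd hEm.symm h⟩

end BreakStep

section Execution

variable {V : Type*} [DecidableEq V] {p : V → Option V} {N : ℕ} {idf : V → Fin (N + 1)}
  {f : ℕ → (V → Fin (N + 1)) × (V → Fin (N + 1))}

theorem eventuallyConst_snd_of_parent (hsteps : ∀ n, BreakStep p N idf (f n) (f (n + 1)))
    {v : V} (hpar : ∀ w, p v = some w → EventuallyConst (fun t => (f t).1 w) atTop) :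
    EventuallyConst (fun t => (f t).2 v) atTop := by
  obtain ⟨a, ha⟩ : ∃ a, ∀ᶠ t in atTop, ∀ w, p v = some w → (f t).1 w = a := by
    cases hv : p v with
    | none => exact ⟨0, by simp⟩
    | some w =>
      obtain ⟨a, ha⟩ := eventuallyConst_iff_exists_eventuallyEq.1 (hpar w hv)
      exact ⟨a, ha.mono fun t ht w' hw' => Option.some_injective _ hw' ▸ ht⟩
  refine eventuallyConst_of_succ_ne_imp_eq (a := a) (ha.mono fun t ht hne => ?_)
  obtain ⟨w, hw, heq⟩ := (hsteps t).exists_parent_of_snd_ne hne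
  exact heq.trans (ht w hw)

theorem eventuallyConst_fst_of_snd (hsteps : ∀ n, BreakStep p N idf (f n) (f (n + 1)))
    {v : V} (hE : EventuallyConst (fun t => (f t).2 v) atTop) :
    EventuallyConst (fun t => (f t).1 v) atTop := by
  obtain ⟨e, he⟩ := eventuallyConst_iff_exists_eventuallyEq.1 hE
  exact eventuallyConst_of_succ_ne_imp (e := e)
    (he.mono fun t (ht : (f t).2 v = e) hne => ht ▸ (hsteps t).fst_ne_snd_of_fst_ne hne)

end Execution

/-- In an acyclic parent structure on `n` nodes with values from a finite range, there is
no infinite execution of the rules Min, Start, ID. -/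
theorem stmt_17 {V : Type*} [Fintype V] [DecidableEq V] (p : V → Option V)
    (hacyc : ∀ x, ¬ Relation.TransGen (fun a b => p a = some b) x x)
    (N : ℕ) (idf : V → Fin (N + 1))
    (f : ℕ → (V → Fin (N + 1)) × (V → Fin (N + 1)))
    (hsteps : ∀ n, BreakStep p N idf (f n) (f (n + 1))) : False := by
  have hnode (v : V) : EventuallyConst (fun t => (f t).1 v) atTop ∧
      EventuallyConst (fun t => (f t).2 v) atTop := by
    induction v using (wellFounded_swap_of_acyclic hacyc).induction with
    | _ v ih =>
      have hE := eventuallyConst_snd_of_parent hsteps fun w hw => (ih w hw).1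
      exact ⟨eventuallyConst_fst_of_snd hsteps hE, hE⟩
  have hstable : ∀ᶠ t in atTop, ∀ v,
      (f (t + 1)).1 v = (f t).1 v ∧ (f (t + 1)).2 v = (f t).2 v :=
    eventually_all.2 fun v => (eventuallyConst_atTop_nat_iff_eventually.1
      ((hnode v).1.prodMk (hnode v).2)).mono fun _ => Prod.ext_iff.1
  obtain ⟨t, ht⟩ := hstable.exists
  exact (hsteps t).ne (Prod.ext (funext fun v => (ht v).1) (funext fun v => (ht v).2))
end
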